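/- For the quasi-conformal coframe, the scalar B-object satisfies B = η^{ab}⁽¹⁾B_{ab} = η^{ab}⁽²⁾B_{ab} = e^{−2f}Δ̃φ at every point, where Δ̃φ = φ₁₁+φ₂₂+φ₃₃. -/

import Mathlib

open scoped BigOperators

noncomputable section

/-- Partial derivative along coordinate `i` on `ℝ³`. -/
def pd (i : Fin 3) (f : (Fin 3 → ℝ) → ℝ) : (Fin 3 → ℝ) → ℝ :=
  fun x => fderiv ℝ f x (Pi.single i 1)

/-- Partial derivative indexed by a 4-index: zero for the time index `0`. -/
def pd4 (f : (Fin 3 → ℝ) → ℝ) (p : Fin 4) : (Fin 3 → ℝ) → ℝ :=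
  if h : p = 0 then 0 else pd (p.pred h) f

/-- Signs of the Minkowski metric `η = diag(1,−1,−1,−1)`. -/
def epsM (a : Fin 4) : ℝ := if a = 0 then 1 else -1

/-- The Minkowski metric `η = diag(1,−1,−1,−1)`. -/
def etaM (a b : Fin 4) : ℝ := if a = b then epsM a else 0

/-- Anholonomity objects `C^a_{mn}` of the quasi-conformal coframe
`ϑ⁰ = e^{−f}dt`, `ϑⁱ = e^{f}dxⁱ`:  `C⁰_{0i} = e^{−f}fᵢ`, `C^i_{ij} = −e^{−f}fⱼ`
(spatial `i ≠ j`), antisymmetric in the lower pair, all other components zero. -/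
def Cob (f : (Fin 3 → ℝ) → ℝ) (a m n : Fin 4) : (Fin 3 → ℝ) → ℝ := fun x =>
  if a = 0 then
    Real.exp (-f x) * ((if m = 0 then pd4 f n x else 0) - (if n = 0 then pd4 f m x else 0))
  else
    Real.exp (-f x) * ((if n = a then pd4 f m x else 0) - (if m = a then pd4 f n x else 0))

/-- The contraction `C_a := C^m_{am}`. -/
def Cone (f : (Fin 3 → ℝ) → ℝ) (a : Fin 4) : (Fin 3 → ℝ) → ℝ :=
  fun x => ∑ m : Fin 4, Cob f m a m x

/-- The B-objects `B^a_{mn0} := 0`, `B^a_{mnp} := e^{−f} ∂_p C^a_{mn}` for `p = 1,2,3`. -/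
def Bob (f : (Fin 3 → ℝ) → ℝ) (a m n p : Fin 4) : (Fin 3 → ℝ) → ℝ :=
  fun x => Real.exp (-f x) * pd4 (Cob f a m n) p x

/-- `⁽¹⁾B_{ab} := B_{abm}{}^m` (indices moved with `η`). -/
def B1 (f : (Fin 3 → ℝ) → ℝ) (a b : Fin 4) : (Fin 3 → ℝ) → ℝ :=
  fun x => epsM a * ∑ m : Fin 4, epsM m * Bob f a b m m x

/-- `⁽²⁾B_{ab} := B^m{}_{mab}`. -/
def B2 (f : (Fin 3 → ℝ) → ℝ) (a b : Fin 4) : (Fin 3 → ℝ) → ℝ :=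
  fun x => ∑ m : Fin 4, Bob f m m a b x

/-- `⁽³⁾B_{ab} := B^m{}_{abm}`. -/
def B3 (f : (Fin 3 → ℝ) → ℝ) (a b : Fin 4) : (Fin 3 → ℝ) → ℝ :=
  fun x => ∑ m : Fin 4, Bob f m a b m x

/-- The scalar B-object `B := η^{ab}⁽¹⁾B_{ab}`. -/
def Bscalar (f : (Fin 3 → ℝ) → ℝ) : (Fin 3 → ℝ) → ℝ :=
  fun x => ∑ a : Fin 4, epsM a * B1 f a a x

/-- `⁽¹⁾A_{ab} := C_{abm}C^m`. -/
def A1 (f : (Fin 3 → ℝ) → ℝ) (a b : Fin 4) : (Fin 3 → ℝ) → ℝ :=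
  fun x => epsM a * ∑ m : Fin 4, epsM m * Cob f a b m x * Cone f m x

/-- `⁽²⁾A_{ab} := C_{mab}C^m`. -/
def A2 (f : (Fin 3 → ℝ) → ℝ) (a b : Fin 4) : (Fin 3 → ℝ) → ℝ :=
  fun x => ∑ m : Fin 4, Cob f m a b x * Cone f m x

/-- `⁽³⁾A_{ab} := C_{amn}C_b{}^{mn}`. -/
def A3 (f : (Fin 3 → ℝ) → ℝ) (a b : Fin 4) : (Fin 3 → ℝ) → ℝ :=
  fun x => epsM a * epsM b *
    ∑ m : Fin 4, ∑ n : Fin 4, epsM m * epsM n * Cob f a m n x * Cob f b m n x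

/-- `⁽⁴⁾A_{ab} := C_{amn}C^m{}_b{}^n`. -/
def A4 (f : (Fin 3 → ℝ) → ℝ) (a b : Fin 4) : (Fin 3 → ℝ) → ℝ :=
  fun x => epsM a * ∑ m : Fin 4, ∑ n : Fin 4, epsM n * Cob f a m n x * Cob f m b n x

/-- `⁽⁵⁾A_{ab} := C_{man}C^n{}_b{}^m`. -/
def A5 (f : (Fin 3 → ℝ) → ℝ) (a b : Fin 4) : (Fin 3 → ℝ) → ℝ :=
  fun x => ∑ m : Fin 4, ∑ n : Fin 4, Cob f m a n x * Cob f n b m x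

/-- `⁽⁶⁾A_{ab} := C_{man}C^m{}_b{}^n`. -/
def A6 (f : (Fin 3 → ℝ) → ℝ) (a b : Fin 4) : (Fin 3 → ℝ) → ℝ :=
  fun x => ∑ m : Fin 4, ∑ n : Fin 4, epsM m * epsM n * Cob f m a n x * Cob f m b n x

/-- `⁽⁷⁾A_{ab} := C_a C_b`. -/
def A7 (f : (Fin 3 → ℝ) → ℝ) (a b : Fin 4) : (Fin 3 → ℝ) → ℝ :=
  fun x => Cone f a x * Cone f b x

/-- `⁽¹⁾A := η^{ab}⁽¹⁾A_{ab}`. -/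
def A1s (f : (Fin 3 → ℝ) → ℝ) : (Fin 3 → ℝ) → ℝ :=
  fun x => ∑ a : Fin 4, epsM a * A1 f a a x

/-- `⁽²⁾A := η^{ab}⁽³⁾A_{ab}`. -/
def A2s (f : (Fin 3 → ℝ) → ℝ) : (Fin 3 → ℝ) → ℝ :=
  fun x => ∑ a : Fin 4, epsM a * A3 f a a x

/-- `⁽³⁾A := η^{ab}⁽⁴⁾A_{ab}`. -/
def A3s (f : (Fin 3 → ℝ) → ℝ) : (Fin 3 → ℝ) → ℝ :=
  fun x => ∑ a : Fin 4, epsM a * A4 f a a x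

/-- `φ_{ij} := f_{ij} − fᵢfⱼ`. -/
def phiM (f : (Fin 3 → ℝ) → ℝ) (i j : Fin 3) : (Fin 3 → ℝ) → ℝ :=
  fun x => pd i (pd j f) x - pd i f x * pd j f x

/-- `Δ̃φ := φ₁₁ + φ₂₂ + φ₃₃`. -/
def tphi (f : (Fin 3 → ℝ) → ℝ) : (Fin 3 → ℝ) → ℝ :=
  fun x => ∑ i : Fin 3, phiM f i i x

/-- The Laplacian `Δf := f₁₁ + f₂₂ + f₃₃`. -/
def lap (f : (Fin 3 → ℝ) → ℝ) : (Fin 3 → ℝ) → ℝ :=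
  fun x => ∑ i : Fin 3, pd i (pd i f) x

/-- `∇²f := f₁² + f₂² + f₃²`. -/
def grad2 (f : (Fin 3 → ℝ) → ℝ) : (Fin 3 → ℝ) → ℝ :=
  fun x => ∑ i : Fin 3, pd i f x ^ 2

/-- The leading (second order) part
`L_{ab} = β₁⁽¹⁾B_{(ab)} + β₂⁽²⁾B_{(ab)} + β₃⁽³⁾B_{ab} + β₄η_{ab}B + β₅⁽¹⁾B_{[ab]} + β₆⁽²⁾B_{[ab]}`. -/
def Lmat (β₁ β₂ β₃ β₄ β₅ β₆ : ℝ) (f : (Fin 3 → ℝ) → ℝ) (a b : Fin 4) :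
    (Fin 3 → ℝ) → ℝ := fun x =>
  β₁ * ((B1 f a b x + B1 f b a x) / 2) + β₂ * ((B2 f a b x + B2 f b a x) / 2) +
  β₃ * B3 f a b x + β₄ * etaM a b * Bscalar f x +
  β₅ * ((B1 f a b x - B1 f b a x) / 2) + β₆ * ((B2 f a b x - B2 f b a x) / 2)

/-- The quadratic part `Q_{ab}`. -/
def Qmat (α₁ α₂ α₃ α₄ α₅ α₆ α₇ α₈ α₉ α₁₀ α₁₁ α₁₂ : ℝ) (f : (Fin 3 → ℝ) → ℝ)
    (a b : Fin 4) : (Fin 3 → ℝ) → ℝ := fun x =>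
  α₁ * ((A1 f a b x + A1 f b a x) / 2) + α₂ * A2 f a b x + α₃ * A3 f a b x +
  α₄ * ((A4 f a b x + A4 f b a x) / 2) + α₅ * A5 f a b x + α₆ * A6 f a b x +
  α₇ * A7 f a b x + α₈ * ((A1 f a b x - A1 f b a x) / 2) +
  α₉ * ((A4 f a b x - A4 f b a x) / 2) +
  etaM a b * (α₁₀ * A1s f x + α₁₁ * A2s f x + α₁₂ * A3s f x)

/-- `diag(β₁−β₄, β₁+β₄, β₁+β₄, β₁+β₄)`. -/
def diagM (β₁ β₄ : ℝ) (a b : Fin 4) : ℝ :=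
  if a = b then (if a = 0 then β₁ - β₄ else β₁ + β₄) else 0

/-! Since `η_{aa}² = 1`, both scalar B-objects are, up to renaming the summation indices,
`Σₘ η^{mm} e^{−f} ∂ₘ C^a_{am}`. The trace `C^a_{an}` collects `+e^{−f}fₙ` from `a = 0`,
nothing from `a = n` and `−e^{−f}fₙ` from each of the two remaining spatial `a`, so it equals
`−e^{−f}fₙ`. Hence `B = Σᵢ e^{−f} ∂ᵢ(e^{−f}fᵢ) = e^{−2f} Σᵢ (fᵢᵢ − fᵢ²) = e^{−2f} Δ̃φ`. -/

section PartialDerivatives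

variable {f : (Fin 3 → ℝ) → ℝ}

theorem differentiable_pd (hf : ContDiff ℝ 2 f) (i : Fin 3) : Differentiable ℝ (pd i f) :=
  ((hf.fderiv_right (m := 1) (by norm_num)).clm_apply contDiff_const).differentiable one_ne_zero

theorem differentiable_pd4 (hf : ContDiff ℝ 2 f) (p : Fin 4) : Differentiable ℝ (pd4 f p) := by
  unfold pd4
  split_ifs
  exacts [differentiable_const 0, differentiable_pd hf _]

theorem pd4_zero (g : (Fin 3 → ℝ) → ℝ) : pd4 g 0 = 0 := rfl

theorem pd4_succ (g : (Fin 3 → ℝ) → ℝ) (j : Fin 3) : pd4 g j.succ = pd j g := by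
  simp [pd4]

theorem pd_fun_neg (i : Fin 3) (g : (Fin 3 → ℝ) → ℝ) (x : Fin 3 → ℝ) :
    pd i (fun y => -g y) x = -pd i g x := by
  simp [pd, fderiv_fun_neg]

theorem pd4_fun_sum {ι : Type*} (s : Finset ι) {g : ι → (Fin 3 → ℝ) → ℝ}
    (hg : ∀ k ∈ s, Differentiable ℝ (g k)) (p : Fin 4) (x : Fin 3 → ℝ) :
    pd4 (fun y => ∑ k ∈ s, g k y) p x = ∑ k ∈ s, pd4 (g k) p x := by
  unfold pd4 pd
  split_ifs
  · simp
  · simp [fderiv_fun_sum fun k hk => (hg k hk).differentiableAt]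

theorem pd_exp_neg_mul_pd (hf : ContDiff ℝ 2 f) (i j : Fin 3) (x : Fin 3 → ℝ) :
    pd i (fun y => Real.exp (-f y) * pd j f y) x = Real.exp (-f x) * phiM f i j x := by
  have hexp : HasFDerivAt (fun y => Real.exp (-f y)) (Real.exp (-f x) • -fderiv ℝ f x) x :=
    (hf.differentiable (by norm_num) x).hasFDerivAt.neg.exp
  have hprod := hexp.fun_mul (differentiable_pd hf j x).hasFDerivAt
  rw [pd, hprod.fderiv]
  simp [pd, phiM]
  ring

end PartialDerivatives

section Anholonomity

variable {f : (Fin 3 → ℝ) → ℝ}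

theorem differentiable_Cob (hf : ContDiff ℝ 2 f) (a m n : Fin 4) :
    Differentiable ℝ (Cob f a m n) := by
  have hf1 : Differentiable ℝ f := hf.differentiable (by norm_num)
  have hm := differentiable_pd4 hf m
  have hn := differentiable_pd4 hf n
  unfold Cob
  split_ifs <;> fun_prop

theorem sum_Cob_diag (j : Fin 3) :
    (fun y => ∑ a : Fin 4, Cob f a a j.succ y) = fun y => -(Real.exp (-f y) * pd j f y) := by
  funext y
  fin_cases j <;> simp [Fin.sum_univ_four, Cob, pd4]

end Anholonomity

section ScalarBObject

variable (f : (Fin 3 → ℝ) → ℝ) (x : Fin 3 → ℝ)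

theorem epsM_mul_self (a : Fin 4) : epsM a * epsM a = 1 := by
  unfold epsM; split_ifs <;> norm_num

theorem epsM_succ (j : Fin 3) : epsM j.succ = -1 := by
  simp [epsM]

theorem Bscalar_eq_sum_Bob : Bscalar f x = ∑ a, ∑ m, epsM m * Bob f a a m m x := by
  simp only [Bscalar, B1, ← mul_assoc, epsM_mul_self, one_mul]

theorem sum_epsM_mul_B2_eq_Bscalar : ∑ a, epsM a * B2 f a a x = Bscalar f x := by
  rw [Bscalar_eq_sum_Bob, Finset.sum_comm]
  simp only [B2, Finset.mul_sum]

variable {f}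

theorem Bscalar_eq_sum_pd4_trace (hf : ContDiff ℝ 2 f) :
    Bscalar f x =
      ∑ m, epsM m * (Real.exp (-f x) * pd4 (fun y => ∑ a, Cob f a a m y) m x) := by
  rw [Bscalar_eq_sum_Bob, Finset.sum_comm]
  refine Finset.sum_congr rfl fun m _ => ?_
  rw [pd4_fun_sum _ fun a _ => differentiable_Cob hf a a m]
  simp only [Bob, Finset.mul_sum]

end ScalarBObject

/-- for the quasi-conformal coframe, the scalar B-object satisfies
`B = η^{ab}⁽¹⁾B_{ab} = η^{ab}⁽²⁾B_{ab} = e^{−2f}Δ̃φ` at every point. -/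
theorem scalar_B_object (f : (Fin 3 → ℝ) → ℝ) (hf : ContDiff ℝ (⊤ : ℕ∞) f)
    (x : Fin 3 → ℝ) :
    Bscalar f x = Real.exp (-2 * f x) * tphi f x ∧
      (∑ a : Fin 4, epsM a * B2 f a a x) = Real.exp (-2 * f x) * tphi f x := by
  have hf2 : ContDiff ℝ 2 f := hf.of_le (by norm_cast)
  have hB : Bscalar f x = Real.exp (-2 * f x) * tphi f x := by
    rw [Bscalar_eq_sum_pd4_trace x hf2, Fin.sum_univ_succ]
    simp only [pd4_zero, Pi.zero_apply, mul_zero, zero_add, epsM_succ, pd4_succ, sum_Cob_diag,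
      pd_fun_neg, pd_exp_neg_mul_pd hf2, tphi, Finset.mul_sum]
    refine Finset.sum_congr rfl fun i _ => ?_
    rw [show -2 * f x = -f x + -f x by ring, Real.exp_add]
    ring
  exact ⟨hB, (sum_epsM_mul_B2_eq_Bscalar f x).trans hB⟩
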